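/- arXiv:1506.02101 — 6 statements merged into one kernel-verified Lean document; each statement's English description precedes it below -/
import Mathlib

section
/- A function φ : [0,∞) → [0,1) is an MT-function if and only if for every nonincreasing sequence {x_n} in [0,∞), sup_{n} φ(x_n) < 1. -/
/-!
A nonincreasing sequence in `[0, ∞)` converges to its infimum `t` from the right or equal, and
the MT condition at `t` bounds `φ` on some `[t, t + ε)` by a constant `< 1`; the finitely many
terms outside that interval are `< 1` anyway. Conversely, if the limsup at `t` were `≥ 1`, one
picks inductively points `x n > t` below `x (n - 1)` with `φ (x n) > 1 - 1/(n+1)`, giving a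
decreasing sequence along which `sup φ = 1`.
-/

open Filter Set Topology

/-- `MTfun φ`: φ is an MT-function, i.e. `limsup_{s→t⁺} φ(s) < 1` for all `t ≥ 0`. -/
def MTfun (φ : ℝ → ℝ) : Prop :=
  ∀ t : ℝ, 0 ≤ t → Filter.limsup φ (nhdsWithin t (Set.Ioi t)) < 1

/-- `MTlfun λ μ`: μ is an MT(λ)-function, i.e. `limsup_{s→t⁺} μ(s) < λ` for all `t ≥ 0`. -/
def MTlfun (l : ℝ) (μ : ℝ → ℝ) : Prop :=
  ∀ t : ℝ, 0 ≤ t → Filter.limsup μ (nhdsWithin t (Set.Ioi t)) < l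

theorem ciSup_lt_of_forall_lt_of_eventually_le {β : Type*}
    [ConditionallyCompleteLinearOrder β] {u : ℕ → β} {a c : β} (hu : ∀ n, u n < a)
    (hca : c < a) (hc : ∀ᶠ n in atTop, u n ≤ c) : ⨆ n, u n < a := by
  obtain ⟨N, hN⟩ := eventually_atTop.1 hc
  let M := (Finset.range (N + 1)).sup' Finset.nonempty_range_add_one u
  have hMa : M < a := (Finset.sup'_lt_iff _).2 fun n _ => hu n
  refine (ciSup_le fun n => ?_).trans_lt (max_lt hMa hca)
  rcases le_or_gt N n with hn | hn
  · exact (hN n hn).trans (le_max_right _ _)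
  · exact (Finset.le_sup' u (Finset.mem_range.2 (by omega))).trans (le_max_left _ _)

theorem exists_eventually_le_nhdsGE_of_limsup_nhdsGT_lt {α : Type*} [TopologicalSpace α]
    [LinearOrder α] {f : α → ℝ} {t : α} {a : ℝ} (hf : IsBoundedUnder (· ≤ ·) (𝓝[>] t) f)
    (hlim : limsup f (𝓝[>] t) < a) (ht : f t < a) :
    ∃ c < a, ∀ᶠ s in 𝓝[≥] t, f s ≤ c := by
  obtain ⟨c, hlim_c, hca⟩ := exists_between hlim
  have hgt : ∀ᶠ s in 𝓝[>] t, f s ≤ c :=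
    (eventually_lt_of_limsup_lt hlim_c hf).mono fun _ => le_of_lt
  refine ⟨max (f t) c, max_lt ht hca, ?_⟩
  rw [← Ioi_insert, nhdsWithin_insert, eventually_sup, eventually_pure]
  exact ⟨le_max_left _ _, hgt.mono fun _ hs => hs.trans (le_max_right _ _)⟩

theorem exists_strictAnti_of_frequently_nhdsGT {α : Type*} [TopologicalSpace α]
    [LinearOrder α] [OrderTopology α] {t : α} {p : ℕ → α → Prop}
    (h : ∀ n, ∃ᶠ s in 𝓝[>] t, p n s) :
    ∃ x : ℕ → α, StrictAnti x ∧ (∀ n, t < x n) ∧ ∀ n, p n (x n) := by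
  have step : ∀ n (b : Ioi t), ∃ s : Ioi t, (s : α) < b ∧ p n s := fun n b => by
    obtain ⟨s, hs, hts, hsb⟩ := ((h n).and_eventually (Ioo_mem_nhdsGT b.2)).exists
    exact ⟨⟨s, hts⟩, hsb, hs⟩
  choose g hg_lt hg_p using step
  obtain ⟨b, -, hb⟩ := ((h 0).and_eventually self_mem_nhdsWithin).exists
  -- `x n := g n (y n)` is definitionally `y (n + 1)`, so `x (n + 1) < y (n + 1) = x n`.
  let y : ℕ → Ioi t := fun n => Nat.rec ⟨b, hb⟩ (fun n s => g n s) n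
  exact ⟨fun n => g n (y n), strictAnti_nat_of_succ_lt fun n => hg_lt _ _,
    fun n => (g n (y n)).2, fun n => hg_p _ _⟩

theorem stmt_6 (φ : ℝ → ℝ) (hmap : ∀ t : ℝ, 0 ≤ t → 0 ≤ φ t ∧ φ t < 1) :
    MTfun φ ↔ ∀ x : ℕ → ℝ, (∀ n, 0 ≤ x n) → (∀ n, x (n + 1) ≤ x n) →
      (⨆ n, φ (x n)) < 1 := by
  constructor
  · intro hMT x hx0 hxd
    have hbdd : BddBelow (range x) := ⟨0, forall_mem_range.2 hx0⟩
    have ht0 : 0 ≤ ⨅ n, x n := le_ciInf hx0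
    have hlim : Tendsto x atTop (𝓝[≥] ⨅ n, x n) :=
      tendsto_nhdsWithin_iff.2 ⟨tendsto_atTop_ciInf (antitone_nat_of_succ_le hxd) hbdd,
        Eventually.of_forall fun n => ciInf_le hbdd n⟩
    have hφ_bdd : IsBoundedUnder (· ≤ ·) (𝓝[>] ⨅ n, x n) φ :=
      isBoundedUnder_of_eventually_le <| eventually_nhdsWithin_of_forall fun s hs =>
        (hmap s (ht0.trans (le_of_lt hs))).2.le
    obtain ⟨c, hc1, hc⟩ :=
      exists_eventually_le_nhdsGE_of_limsup_nhdsGT_lt hφ_bdd (hMT _ ht0) (hmap _ ht0).2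
    exact ciSup_lt_of_forall_lt_of_eventually_le (fun n => (hmap _ (hx0 n)).2) hc1
      (hlim.eventually hc)
  · intro hsup t ht0
    by_contra! hlim
    have hcob : IsCoboundedUnder (· ≤ ·) (𝓝[>] t) φ :=
      isCoboundedUnder_le_of_eventually_le _ <| eventually_nhdsWithin_of_forall fun s hs =>
        (hmap s (ht0.trans (le_of_lt hs))).1
    have hfreq (n : ℕ) : ∃ᶠ s in 𝓝[>] t, 1 - 1 / ((n : ℝ) + 1) < φ s :=
      frequently_lt_of_lt_limsup hcob ((sub_lt_self 1 Nat.one_div_pos_of_nat).trans_le hlim)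
    obtain ⟨x, hx_anti, htx, hφx⟩ := exists_strictAnti_of_frequently_nhdsGT hfreq
    have hx0 (n : ℕ) : 0 ≤ x n := ht0.trans (htx n).le
    have hφ_bdd : BddAbove (range fun n => φ (x n)) :=
      ⟨1, forall_mem_range.2 fun n => (hmap _ (hx0 n)).2.le⟩
    have hsup_x := hsup x hx0 fun n => (hx_anti n.lt_succ_self).le
    obtain ⟨n, hn⟩ := exists_nat_one_div_lt (sub_pos.2 hsup_x)
    linarith [hφx n, le_ciSup hφ_bdd n]
end

section
/- A function φ : [0,∞) → [0,1) is an MT-function if and only if for every strictly decreasing sequence {x_n} in [0,∞), sup_n φ(x_n) < 1. -/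
open Filter Set

theorem stmt_7 (φ : ℝ → ℝ) (hmap : ∀ t : ℝ, 0 ≤ t → 0 ≤ φ t ∧ φ t < 1) :
    MTfun φ ↔ ∀ x : ℕ → ℝ, (∀ n, 0 ≤ x n) → (∀ n, x (n + 1) < x n) →
      (⨆ n, φ (x n)) < 1 := by
  constructor
  · -- Forward direction
    intro hMT x hx0 hxdec
    -- t = inf of the sequence
    set t : ℝ := ⨅ n, x n with ht
    have hbdd : BddBelow (Set.range x) := ⟨0, by rintro _ ⟨n, rfl⟩; exact hx0 n⟩
    have ht0 : 0 ≤ t := le_ciInf hx0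
    have hanti : StrictAnti x := strictAnti_nat_of_succ_lt hxdec
    have hxt : ∀ n, t < x n := fun n =>
      lt_of_le_of_lt (ciInf_le hbdd (n + 1)) (hxdec n)
    have htend : Filter.Tendsto x Filter.atTop (nhdsWithin t (Set.Ioi t)) := by
      apply tendsto_nhdsWithin_of_tendsto_nhds_of_eventually_within
      · exact tendsto_atTop_ciInf hanti.antitone hbdd
      · exact Filter.Eventually.of_forall fun n => hxt n
    have hL := hMT t ht0
    set L := Filter.limsup φ (nhdsWithin t (Set.Ioi t)) with hLdef
    set c : ℝ := (L + 1) / 2 with hc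
    have hLc : L < c := by rw [hc]; linarith
    have hc1 : c < 1 := by rw [hc]; linarith
    have hbd : (nhdsWithin t (Set.Ioi t)).IsBoundedUnder (· ≤ ·) φ := by
      apply Filter.isBoundedUnder_of_eventually_le (a := 1)
      filter_upwards [eventually_mem_nhdsWithin] with s hs
      exact le_of_lt (hmap s (le_of_lt (lt_of_le_of_lt ht0 hs))).2
    have hev : ∀ᶠ s in nhdsWithin t (Set.Ioi t), φ s < c :=
      Filter.eventually_lt_of_limsup_lt hLc hbd
    have hev2 : ∀ᶠ n in Filter.atTop, φ (x n) < c := htend.eventually hev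
    obtain ⟨N, hN⟩ := Filter.eventually_atTop.mp hev2
    set M : ℝ := (Finset.range (N + 1)).sup' (by simp) (fun n => φ (x n)) with hM
    have hφ1 : ∀ n, φ (x n) < 1 := fun n =>
      (hmap (x n) (hx0 n)).2
    have hM1 : M < 1 := by
      rw [hM, Finset.sup'_lt_iff]
      intro n _
      exact hφ1 n
    have hle : ∀ n, φ (x n) ≤ max c M := by
      intro n
      rcases le_or_gt n N with h | h
      · exact le_trans (Finset.le_sup' (fun n => φ (x n))
          (Finset.mem_range.mpr (Nat.lt_succ_of_le h))) (le_max_right _ _)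
      · exact le_trans (le_of_lt (hN n (le_of_lt h))) (le_max_left _ _)
    exact lt_of_le_of_lt (ciSup_le hle) (max_lt hc1 hM1)
  · -- Reverse direction
    intro hseq
    intro t ht0
    by_contra hcon
    push_neg at hcon
    have hcob : (nhdsWithin t (Set.Ioi t)).IsCoboundedUnder (· ≤ ·) φ := by
      apply Filter.IsCoboundedUnder.of_frequently_ge (a := 0)
      apply Filter.Eventually.frequently
      filter_upwards [eventually_mem_nhdsWithin] with s hs
      exact (hmap s (le_of_lt (lt_of_le_of_lt ht0 hs))).1
    -- For every c < 1 and every b > t, there is s ∈ (t, b) with φ s > c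
    have key : ∀ b : ℝ, t < b → ∀ n : ℕ, ∃ s : ℝ, t < s ∧ s < b ∧
        1 - 1 / (n + 1) < φ s := by
      intro b hb n
      have hc1 : (1 : ℝ) - 1 / (n + 1) < 1 := by
        have : (0:ℝ) < 1 / (n + 1) := by positivity
        linarith
      have hfreq : ∃ᶠ s in nhdsWithin t (Set.Ioi t), 1 - 1 / (n + 1) < φ s :=
        Filter.frequently_lt_of_lt_limsup hcob (lt_of_lt_of_le hc1 hcon)
      have hmem : Set.Ioo t b ∈ nhdsWithin t (Set.Ioi t) :=
        Ioo_mem_nhdsGT_of_mem (Set.left_mem_Ico.mpr hb)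
      obtain ⟨s, hs1, hs2⟩ := (hfreq.and_eventually
        (Filter.eventually_of_mem hmem (fun y hy => hy))).exists
      exact ⟨s, hs2.1, hs2.2, hs1⟩
    -- Build the sequence recursively
    choose! g hg1 hg2 hg3 using key
    set x : ℕ → ℝ := fun n => Nat.rec (g (t + 1) 0) (fun n xn => g xn (n + 1)) n with hx
    have hxt : ∀ n, t < x n := by
      intro n
      induction n with
      | zero => exact hg1 (t + 1) (by linarith) 0
      | succ k ih => exact hg1 (x k) ih (k + 1)
    have hxdec : ∀ n, x (n + 1) < x n := fun n => hg2 (x n) (hxt n) (n + 1)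
    have hxlb : ∀ n, 1 - 1 / (n + 1) < φ (x n) := by
      intro n
      cases n with
      | zero => exact hg3 (t + 1) (by linarith) 0
      | succ k => exact hg3 (x k) (hxt k) (k + 1)
    have hx0 : ∀ n, 0 ≤ x n := fun n => le_of_lt (lt_of_le_of_lt ht0 (hxt n))
    have hS := hseq x hx0 hxdec
    set S := ⨆ n, φ (x n) with hSdef
    have hbddS : BddAbove (Set.range fun n => φ (x n)) :=
      ⟨1, by rintro _ ⟨n, rfl⟩; exact le_of_lt (hmap (x n) (hx0 n)).2⟩
    obtain ⟨n, hn⟩ := exists_nat_one_div_lt (show (0:ℝ) < 1 - S by linarith)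
    have h1 : 1 - 1 / (n + 1) < φ (x n) := hxlb n
    have h2 : φ (x n) ≤ S := le_ciSup hbddS n
    linarith
end

section
/- A function φ : [0,∞) → [0,1) is an MT-function if and only if for every eventually nonincreasing sequence {x_n} in [0,∞), sup_n φ(x_n) < 1. -/
open Filter Set

/-!
An eventually nonincreasing sequence in `[0, ∞)` converges to its infimum `T` from above, so the
MT condition at `T` (together with `φ T < 1`) bounds `φ` along a tail of the sequence by some
`c < 1`, and each of the finitely many remaining terms is `< 1`. Conversely, if
`limsup_{s → t⁺} φ s ≥ 1`, one can pick points `s` decreasing to `t` one after another with `φ s`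
tending to `1`, which gives a nonincreasing sequence along which `sup φ = 1`.
-/

open Topology

lemma exists_lt_eventually_le_nhdsGE {α : Type*} [TopologicalSpace α] [PartialOrder α]
    {φ : α → ℝ} {t : α} {a : ℝ} (hlimsup : limsup φ (𝓝[>] t) < a)
    (hbdd : IsBoundedUnder (· ≤ ·) (𝓝[>] t) φ) (hφt : φ t < a) :
    ∃ c < a, ∀ᶠ s in 𝓝[≥] t, φ s ≤ c := by
  obtain ⟨c, hc, hca⟩ := exists_between (max_lt hlimsup hφt)
  refine ⟨c, hca, ?_⟩
  rw [← Ioi_insert, nhdsWithin_insert, eventually_sup, eventually_pure]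
  exact ⟨le_of_max_le_right hc.le,
    (eventually_lt_of_limsup_lt (lt_of_le_of_lt (le_max_left _ _) hc) hbdd).mono
      fun _ hs => hs.le⟩

lemma exists_antitone_seq_of_frequently_nhdsGT {α : Type*} [TopologicalSpace α] [LinearOrder α]
    [OrderTopology α] {t : α} {P : ℕ → α → Prop} (hP : ∀ n, ∃ᶠ s in 𝓝[>] t, P n s) :
    ∃ x : ℕ → α, Antitone x ∧ (∀ n, t < x n) ∧ ∀ n, P n (x n) := by
  obtain ⟨x₀, hP₀, hx₀⟩ := ((hP 0).and_eventually self_mem_nhdsWithin).exists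
  have below (n : ℕ) (a : α) (ha : t < a) : ∃ s, t < s ∧ s < a ∧ P n s := by
    obtain ⟨s, hs, hmem⟩ := ((hP n).and_eventually (Ioo_mem_nhdsGT ha)).exists
    exact ⟨s, hmem.1, hmem.2, hs⟩
  choose! next hnext_gt hnext_lt hnext_P using below
  let x : ℕ → α := fun n => Nat.rec x₀ (fun m xm => next (m + 1) xm) n
  have hx_gt (n : ℕ) : t < x n := by
    induction n with
    | zero => exact hx₀
    | succ m ih => exact hnext_gt _ _ ih
  refine ⟨x, antitone_nat_of_succ_le fun n => (hnext_lt _ _ (hx_gt n)).le, hx_gt, ?_⟩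
  rintro (_ | m)
  exacts [hP₀, hnext_P _ _ (hx_gt m)]

lemma exists_forall_le_lt_of_eventually_le {f : ℕ → ℝ} {a c : ℝ} (hf : ∀ n, f n < a)
    (hca : c < a) (hev : ∀ᶠ n in atTop, f n ≤ c) : ∃ d < a, ∀ n, f n ≤ d := by
  obtain ⟨N, hN⟩ := eventually_atTop.mp hev
  set m := (Finset.range (N + 1)).sup' Finset.nonempty_range_add_one f
  refine ⟨max c m, max_lt hca ((Finset.sup'_lt_iff _).mpr fun n _ => hf n), fun n => ?_⟩
  rcases le_or_gt n N with hn | hn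
  · exact (Finset.le_sup' f (Finset.mem_range_succ_iff.mpr hn)).trans (le_max_right _ _)
  · exact (hN n hn.le).trans (le_max_left _ _)

lemma exists_tendsto_nhdsGE_of_eventually_antitone {α : Type*} [ConditionallyCompleteLattice α]
    [TopologicalSpace α] [InfConvergenceClass α] {x : ℕ → α} (hbdd : BddBelow (range x))
    {l : ℕ} (hl : ∀ n ≥ l, x (n + 1) ≤ x n) : ∃ T, Tendsto x atTop (𝓝[≥] T) := by
  have hanti : Antitone fun n => x (n + l) :=
    antitone_nat_of_succ_le fun n => by simpa only [Nat.add_right_comm] using hl (n + l) le_add_self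
  have hbdd' : BddBelow (range fun n => x (n + l)) := hbdd.mono (range_comp_subset_range _ x)
  refine ⟨⨅ n, x (n + l), (tendsto_add_atTop_iff_nat l).mp ?_⟩
  exact tendsto_nhdsWithin_iff.mpr ⟨tendsto_atTop_ciInf hanti hbdd',
    Eventually.of_forall fun n => ciInf_le hbdd' n⟩

lemma MTfun.iSup_comp_lt_one {φ : ℝ → ℝ} (hMT : MTfun φ) (hφ : ∀ t, 0 ≤ t → φ t < 1)
    {x : ℕ → ℝ} (hx : ∀ n, 0 ≤ x n) {l : ℕ} (hl : ∀ n ≥ l, x (n + 1) ≤ x n) :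
    ⨆ n, φ (x n) < 1 := by
  obtain ⟨T, hxT⟩ := exists_tendsto_nhdsGE_of_eventually_antitone ⟨0, forall_mem_range.mpr hx⟩ hl
  have hT : 0 ≤ T := ge_of_tendsto (tendsto_nhdsWithin_iff.mp hxT).1 (Eventually.of_forall hx)
  have hbdd : IsBoundedUnder (· ≤ ·) (𝓝[>] T) φ := isBoundedUnder_of_eventually_le
    (eventually_nhdsWithin_of_forall fun s hs => (hφ s (hT.trans hs.le)).le)
  obtain ⟨c, hc, hφc⟩ := exists_lt_eventually_le_nhdsGE (hMT T hT) hbdd (hφ T hT)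
  obtain ⟨d, hd, hφd⟩ :=
    exists_forall_le_lt_of_eventually_le (fun n => hφ _ (hx n)) hc (hxT.eventually hφc)
  exact (ciSup_le hφd).trans_lt hd

lemma mtfun_of_forall_iSup_comp_lt_one {φ : ℝ → ℝ} (hφ : ∀ t, 0 ≤ t → 0 ≤ φ t ∧ φ t < 1)
    (hsup : ∀ x : ℕ → ℝ, (∀ n, 0 ≤ x n) → Antitone x → ⨆ n, φ (x n) < 1) : MTfun φ := by
  intro t ht
  by_contra! hlimsup
  have hcobdd : IsCoboundedUnder (· ≤ ·) (𝓝[>] t) φ := IsBoundedUnder.isCoboundedUnder_le <|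
    isBoundedUnder_of_eventually_ge
      (eventually_nhdsWithin_of_forall fun s hs => (hφ s (ht.trans hs.le)).1)
  obtain ⟨u, -, hu1, hu⟩ := exists_seq_strictMono_tendsto (1 : ℝ)
  obtain ⟨x, hx_anti, htx, hux⟩ := exists_antitone_seq_of_frequently_nhdsGT fun n =>
    frequently_lt_of_lt_limsup hcobdd ((hu1 n).trans_le hlimsup)
  have hx : ∀ n, 0 ≤ x n := fun n => ht.trans (htx n).le
  have hbdd : BddAbove (range fun n => φ (x n)) :=
    ⟨1, forall_mem_range.mpr fun n => (hφ _ (hx n)).2.le⟩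
  have h1 : 1 ≤ ⨆ n, φ (x n) := le_of_tendsto' hu fun n => (hux n).le.trans (le_ciSup hbdd n)
  exact (hsup x hx hx_anti).not_ge h1

theorem stmt_8 (φ : ℝ → ℝ) (hmap : ∀ t : ℝ, 0 ≤ t → 0 ≤ φ t ∧ φ t < 1) :
    MTfun φ ↔ ∀ x : ℕ → ℝ, (∀ n, 0 ≤ x n) →
      (∃ l : ℕ, ∀ n ≥ l, x (n + 1) ≤ x n) → (⨆ n, φ (x n)) < 1 :=
  ⟨fun hMT _ hx ⟨_, hl⟩ => hMT.iSup_comp_lt_one (fun t ht => (hmap t ht).2) hx hl,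
    fun h => mtfun_of_forall_iSup_comp_lt_one hmap fun x hx hanti =>
      h x hx ⟨0, fun n _ => hanti n.le_succ⟩⟩
end

section
/- A function φ : [0,∞) → [0,1) is an MT-function if and only if for every eventually strictly decreasing sequence {x_n} in [0,∞), sup_n φ(x_n) < 1. -/
open Filter Set Topology

/-! A bounded sequence that is eventually strictly decreasing converges to its limit strictly from
the right, so an MT-function stays eventually below some `r < 1` along it. Conversely, if the
`limsup` of `φ` at `t⁺` is at least `1`, a sequence realising this `limsup` has, by the
Erdős–Szekeres theorem, a strictly decreasing subsequence, on which `sup φ ≥ 1`. -/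

section Order

variable {α : Type*}

theorem exists_tendsto_nhdsGT_of_eventually_strictAnti [ConditionallyCompleteLinearOrder α]
    [TopologicalSpace α] [OrderTopology α] {x : ℕ → α} (hbdd : BddBelow (range x))
    (hdec : ∃ l, ∀ n ≥ l, x (n + 1) < x n) : ∃ t, Tendsto x atTop (𝓝[>] t) := by
  obtain ⟨l, hl⟩ := hdec
  have htail : StrictAnti fun n ↦ x (n + l) :=
    strictAnti_nat_of_succ_lt fun n ↦ by simpa [Nat.succ_add] using hl (n + l) (by omega)
  have htail_bdd : BddBelow (range fun n ↦ x (n + l)) :=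
    hbdd.mono (range_subset_iff.2 fun n ↦ mem_range_self _)
  refine ⟨⨅ n, x (n + l), (tendsto_add_atTop_iff_nat l).1 ?_⟩
  refine tendsto_nhdsWithin_iff.2 ⟨tendsto_atTop_ciInf htail.antitone htail_bdd,
    Eventually.of_forall fun n ↦ ?_⟩
  exact (ciInf_le htail_bdd (n + 1)).trans_lt (htail n.lt_succ_self)

theorem Filter.Tendsto.exists_strictMono_strictAnti_subseq [LinearOrder α] [TopologicalSpace α]
    [OrderClosedTopology α] {x : ℕ → α} {t : α} (hx : Tendsto x atTop (𝓝[>] t)) :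
    ∃ g : ℕ → ℕ, StrictMono g ∧ StrictAnti (x ∘ g) := by
  obtain ⟨g, hanti | hmono⟩ := exists_increasing_or_nonincreasing_subseq (· > ·) x
  · exact ⟨g, g.strictMono, fun m n hmn ↦ hanti m n hmn⟩
  · exfalso
    have hxg := hx.comp g.strictMono.tendsto_atTop
    obtain ⟨N, hN⟩ := (hxg.eventually self_mem_nhdsWithin).exists
    have hge : ∀ᶠ n in atTop, x (g N) ≤ x (g n) := (eventually_ge_atTop N).mono fun n hn ↦ by
      rcases hn.eq_or_lt with rfl | hlt
      · exact le_rfl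
      · exact not_lt.1 (hmono N n hlt)
    exact (ge_of_tendsto (tendsto_nhds_of_tendsto_nhdsWithin hxg) hge).not_gt hN

theorem ciSup_lt_of_forall_lt_of_eventually_le_s9 [ConditionallyCompleteLinearOrder α]
    {u : ℕ → α} {r c : α} (hu : ∀ n, u n < c) (hrc : r < c) (hev : ∀ᶠ n in atTop, u n ≤ r) :
    ⨆ n, u n < c := by
  obtain ⟨N, hN⟩ := hev.exists_forall_of_atTop
  obtain ⟨i, -, hi⟩ := (Finset.range (N + 1)).exists_max_image u ⟨0, by simp⟩
  refine (ciSup_le fun n ↦ ?_).trans_lt (max_lt hrc (hu i))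
  rcases lt_or_ge n N with hn | hn
  · exact le_max_of_le_right (hi n (Finset.mem_range.2 (by omega)))
  · exact le_max_of_le_left (hN n hn)

end Order

theorem exists_strictAnti_tendsto_limsup_nhdsGT {φ : ℝ → ℝ} {t : ℝ}
    (hc : IsCoboundedUnder (· ≤ ·) (𝓝[>] t) φ) (hb : IsBoundedUnder (· ≤ ·) (𝓝[>] t) φ) :
    ∃ y : ℕ → ℝ, StrictAnti y ∧ (∀ n, t ≤ y n) ∧
      Tendsto (φ ∘ y) atTop (𝓝 (limsup φ (𝓝[>] t))) := by
  obtain ⟨x, hφx, hx⟩ := exists_seq_tendsto_limsup hc hb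
  obtain ⟨g, hg, hanti⟩ := hx.exists_strictMono_strictAnti_subseq
  have hxg := tendsto_nhds_of_tendsto_nhdsWithin (hx.comp hg.tendsto_atTop)
  exact ⟨x ∘ g, hanti, hanti.antitone.le_of_tendsto hxg, hφx.comp hg.tendsto_atTop⟩

theorem stmt_9 (φ : ℝ → ℝ) (hmap : ∀ t : ℝ, 0 ≤ t → 0 ≤ φ t ∧ φ t < 1) :
    MTfun φ ↔ ∀ x : ℕ → ℝ, (∀ n, 0 ≤ x n) →
      (∃ l : ℕ, ∀ n ≥ l, x (n + 1) < x n) → (⨆ n, φ (x n)) < 1 := by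
  have hnear : ∀ t, 0 ≤ t → ∀ᶠ s in 𝓝[>] t, 0 ≤ φ s ∧ φ s < 1 := fun t ht ↦
    eventually_nhdsWithin_of_forall fun s hs ↦ hmap s (ht.trans (le_of_lt hs))
  have hb : ∀ t, 0 ≤ t → IsBoundedUnder (· ≤ ·) (𝓝[>] t) φ := fun t ht ↦
    isBoundedUnder_of_eventually_le ((hnear t ht).mono fun _ h ↦ h.2.le)
  constructor
  · rintro hMT x hx0 hdec
    obtain ⟨t, hxt⟩ := exists_tendsto_nhdsGT_of_eventually_strictAnti ⟨0, by
      rintro _ ⟨n, rfl⟩; exact hx0 n⟩ hdec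
    have ht0 : 0 ≤ t :=
      ge_of_tendsto (tendsto_nhds_of_tendsto_nhdsWithin hxt) (Eventually.of_forall hx0)
    obtain ⟨r, hr, hr1⟩ := exists_between (hMT t ht0)
    have hev := hxt.eventually (eventually_lt_of_limsup_lt hr (hb t ht0))
    exact ciSup_lt_of_forall_lt_of_eventually_le_s9 (fun n ↦ (hmap _ (hx0 n)).2) hr1
      (hev.mono fun _ h ↦ h.le)
  · intro h t ht
    by_contra! hge
    have hc : IsCoboundedUnder (· ≤ ·) (𝓝[>] t) φ :=
      (isBoundedUnder_of_eventually_ge ((hnear t ht).mono fun _ h ↦ h.1)).isCoboundedUnder_le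
    obtain ⟨y, hanti, hty, hφy⟩ := exists_strictAnti_tendsto_limsup_nhdsGT hc (hb t ht)
    have hy0 : ∀ n, 0 ≤ y n := fun n ↦ ht.trans (hty n)
    have hsup := h y hy0 ⟨0, fun n _ ↦ hanti n.lt_succ_self⟩
    have hle : limsup φ (𝓝[>] t) ≤ ⨆ n, φ (y n) :=
      le_of_tendsto' hφy fun n ↦ le_ciSup ⟨1, by rintro _ ⟨m, rfl⟩; exact (hmap _ (hy0 m)).2.le⟩ n
    linarith
end

section
/- Let λ ∈ (0,1]. A function μ : [0,∞) → [0,λ) is an MT(λ)-function if and only if for every eventually strictly decreasing sequence {x_n} in [0,∞), sup_n μ(x_n) < λ. -/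
open Filter Set

theorem stmt_16 (l : ℝ) (hl : 0 < l ∧ l ≤ 1) (μ : ℝ → ℝ)
    (hmap : ∀ t : ℝ, 0 ≤ t → 0 ≤ μ t ∧ μ t < l) :
    MTlfun l μ ↔ ∀ x : ℕ → ℝ, (∀ n, 0 ≤ x n) →
      (∃ k : ℕ, ∀ n ≥ k, x (n + 1) < x n) → (⨆ n, μ (x n)) < l := by
  constructor
  · rintro hMT x hx0 ⟨k, hk⟩
    -- the tail sequence is strictly decreasing
    have hanti : StrictAnti (fun n : ℕ => x (n + k)) := by
      apply strictAnti_nat_of_succ_lt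
      intro n
      have := hk (n + k) (Nat.le_add_left k n)
      simpa [Nat.add_right_comm] using this
    set t : ℝ := ⨅ n : ℕ, x (n + k) with ht
    have hbdd : BddBelow (Set.range fun n : ℕ => x (n + k)) :=
      ⟨0, by rintro y ⟨n, rfl⟩; exact hx0 _⟩
    have ht0 : 0 ≤ t := le_ciInf fun n => hx0 _
    have htlt : ∀ n, t < x (n + k) := fun n =>
      lt_of_le_of_lt (ciInf_le hbdd (n + 1)) (by
        have := hanti (Nat.lt_succ_self n); simpa using this)
    have htends : Tendsto (fun n : ℕ => x (n + k)) atTop (nhdsWithin t (Set.Ioi t)) := by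
      rw [tendsto_nhdsWithin_iff]
      exact ⟨tendsto_atTop_ciInf hanti.antitone hbdd, Eventually.of_forall fun n => htlt n⟩
    have hbound : IsBoundedUnder (· ≤ ·) (nhdsWithin t (Set.Ioi t)) μ := by
      refine isBoundedUnder_of_eventually_le (a := l) ?_
      filter_upwards [self_mem_nhdsWithin] with s hs
      exact (hmap s (le_trans ht0 (le_of_lt hs))).2.le
    have hls := hMT t ht0
    set c : ℝ := (Filter.limsup μ (nhdsWithin t (Set.Ioi t)) + l) / 2 with hc
    have hcl : c < l := by rw [hc]; linarith
    have hlsc : Filter.limsup μ (nhdsWithin t (Set.Ioi t)) < c := by rw [hc]; linarith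
    have hev : ∀ᶠ s in nhdsWithin t (Set.Ioi t), μ s < c :=
      eventually_lt_of_limsup_lt hlsc hbound
    obtain ⟨N, hN⟩ := (htends.eventually hev).exists_forall_of_atTop
    -- bound everything by a finite max
    set g : ℕ → ℝ := fun n => if n < N + k then μ (x n) else c with hg
    have hne : (Finset.range (N + k + 1)).Nonempty := ⟨0, by simp⟩
    set c' : ℝ := (Finset.range (N + k + 1)).sup' hne g with hc'
    have hc'l : c' < l := by
      rw [hc', Finset.sup'_lt_iff]
      intro n _
      by_cases h : n < N + k
      · simpa [hg, h] using (hmap (x n) (hx0 n)).2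
      · simpa [hg, h] using hcl
    have hle : ∀ n, μ (x n) ≤ c' := by
      intro n
      by_cases h : n < N + k
      · have : g n ≤ c' := Finset.le_sup' g (by simp; omega)
        simpa [hg, h] using this
      · have hn : N ≤ n - k := by omega
        have := hN (n - k) hn
        have hnk : n - k + k = n := by omega
        rw [hnk] at this
        have hgc : g (N + k) ≤ c' := Finset.le_sup' g (by simp)
        simp only [hg, lt_irrefl, if_neg (lt_irrefl _)] at hgc
        calc μ (x n) ≤ c := this.le
          _ ≤ c' := by
            have : g (N + k) ≤ c' := Finset.le_sup' g (by simp)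
            simpa [hg] using this
    exact lt_of_le_of_lt (ciSup_le hle) hc'l
  · intro H t ht0
    by_contra hcon
    push_neg at hcon
    have hnb : (nhdsWithin t (Set.Ioi t)).NeBot := nhdsGT_neBot t
    have hcob : IsCoboundedUnder (· ≤ ·) (nhdsWithin t (Set.Ioi t)) μ := by
      refine isCoboundedUnder_le_of_eventually_le (nhdsWithin t (Set.Ioi t)) (x := (0 : ℝ)) ?_
      filter_upwards [self_mem_nhdsWithin] with s hs
      exact (hmap s (le_trans ht0 hs.le)).1
    -- frequently μ s > l - ε near t⁺
    have hfreq : ∀ n : ℕ, ∃ᶠ s in nhdsWithin t (Set.Ioi t), l - 1 / (n + 1) < μ s := by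
      intro n
      apply frequently_lt_of_lt_limsup hcob
      have : (0:ℝ) < 1 / (n + 1) := by positivity
      linarith
    have step : ∀ (n : ℕ) (p : ℝ), t < p → ∃ s, t < s ∧ s < p ∧ l - 1 / (n + 1) < μ s := by
      intro n p hp
      have hmem : Set.Ioo t p ∈ nhdsWithin t (Set.Ioi t) := Ioo_mem_nhdsGT_of_mem ⟨le_refl t, hp⟩
      obtain ⟨s, hs1, hs2⟩ := ((hfreq n).and_eventually (eventually_of_mem hmem fun s hs => hs)).exists
      exact ⟨s, hs2.1, hs2.2, hs1⟩
    -- build the strictly decreasing sequence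
    let X : ℕ → {s : ℝ // t < s} := fun n => Nat.rec
      ⟨t + 1, by linarith⟩
      (fun n p => ⟨(step n p.1 p.2).choose, (step n p.1 p.2).choose_spec.1⟩) n
    have hXsucc : ∀ n : ℕ, (X (n + 1)).1 = (step n (X n).1 (X n).2).choose := by intro n; simp only [X]
    have hXdec : ∀ n : ℕ, (X (n + 1)).1 < (X n).1 := by
      intro n
      rw [hXsucc]
      exact (step n (X n).1 (X n).2).choose_spec.2.1
    have hXμ : ∀ n : ℕ, l - 1 / (n + 1) < μ (X (n + 1)).1 := by
      intro n
      rw [hXsucc]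
      exact (step n (X n).1 (X n).2).choose_spec.2.2
    have hX0 : ∀ n, (0:ℝ) ≤ (X n).1 := fun n => le_trans ht0 (X n).2.le
    have hsup := H (fun n => (X n).1) hX0 ⟨0, fun n _ => hXdec n⟩
    -- but the sup is ≥ l
    have hbdd : BddAbove (Set.range fun n => μ (X n).1) :=
      ⟨l, by rintro y ⟨n, rfl⟩; exact (hmap _ (hX0 n)).2.le⟩
    have hge : ∀ n : ℕ, l - 1 / (n + 1) ≤ ⨆ m, μ (X m).1 := fun n =>
      le_trans (hXμ n).le (le_ciSup hbdd (n + 1))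
    have : l ≤ ⨆ m, μ (X m).1 := by
      by_contra h
      push_neg at h
      obtain ⟨n, hn⟩ := exists_nat_one_div_lt (sub_pos.mpr h)
      have := hge n
      have h1 : (1:ℝ) / (n + 1) < l - ⨆ m, μ (X m).1 := hn
      linarith
    linarith
end

section
/- Let λ ∈ (0,1]. A function μ : [0,∞) → [0,λ) is an MT(λ)-function if and only if for every eventually nonincreasing sequence {x_n} in [0,∞), sup_n μ(x_n) < λ. -/
open Filter Set

theorem stmt_17 (l : ℝ) (hl : 0 < l ∧ l ≤ 1) (μ : ℝ → ℝ)
    (hmap : ∀ t : ℝ, 0 ≤ t → 0 ≤ μ t ∧ μ t < l) :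
    MTlfun l μ ↔ ∀ x : ℕ → ℝ, (∀ n, 0 ≤ x n) →
      (∃ k : ℕ, ∀ n ≥ k, x (n + 1) ≤ x n) → (⨆ n, μ (x n)) < l := by
  constructor
  · rintro hMT x hx ⟨k, hk⟩
    -- the shifted sequence is antitone
    set y : ℕ → ℝ := fun n => x (n + k) with hy
    have hanti : Antitone y := by
      apply antitone_nat_of_succ_le
      intro n
      have := hk (n + k) (Nat.le_add_left _ _)
      simpa [hy, Nat.succ_add, Nat.add_assoc] using this
    have hybdd : BddBelow (Set.range y) := ⟨0, by rintro _ ⟨n, rfl⟩; exact hx _⟩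
    set t : ℝ := ⨅ n, y n with ht
    have ht0 : 0 ≤ t := le_ciInf fun n => hx _
    have htend : Filter.Tendsto y Filter.atTop (nhds t) :=
      tendsto_atTop_ciInf hanti hybdd
    have hty : ∀ n, t ≤ y n := fun n => ciInf_le hybdd n
    -- apply the MT property at t
    have hlim := hMT t ht0
    obtain ⟨b, hb1, hb2⟩ := exists_between hlim
    have hbddU : Filter.IsBoundedUnder (· ≤ ·) (nhdsWithin t (Set.Ioi t)) μ := by
      refine ⟨l, Filter.eventually_map.mpr ?_⟩
      filter_upwards [self_mem_nhdsWithin] with s hs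
      exact (hmap s (le_trans ht0 (le_of_lt hs))).2.le
    have hev : ∀ᶠ s in nhdsWithin t (Set.Ioi t), μ s < b :=
      Filter.eventually_lt_of_limsup_lt hb1 hbddU
    obtain ⟨u, hu, huset⟩ := mem_nhdsGT_iff_exists_Ioo_subset.mp hev
    -- eventually y n < u
    have htu : t < u := hu
    have hevy : ∀ᶠ n in Filter.atTop, y n < u :=
      htend.eventually (Filter.Tendsto.eventually_lt_const htu tendsto_id)
    obtain ⟨N, hN⟩ := Filter.eventually_atTop.mp hevy
    -- bound on the tail
    have htail : ∀ n ≥ N, μ (y n) ≤ max b (μ t) := by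
      intro n hn
      rcases eq_or_lt_of_le (hty n) with h | h
      · rw [← h]; exact le_max_right _ _
      · exact le_max_of_le_left (le_of_lt (huset ⟨h, hN n hn⟩))
    -- global bound
    have hne : (Finset.range (N + k + 1)).Nonempty := ⟨0, Finset.mem_range.mpr (Nat.succ_pos _)⟩
    set D : ℝ := (Finset.range (N + k + 1)).sup' hne (fun i => μ (x i)) with hD
    set C : ℝ := max (max b (μ t)) D with hC
    have hCl : C < l := by
      apply max_lt (max_lt hb2 (hmap t ht0).2)
      rw [hD]
      apply (Finset.sup'_lt_iff hne).mpr
      intro i _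
      exact (hmap (x i) (hx i)).2
    refine lt_of_le_of_lt (ciSup_le fun m => ?_) hCl
    by_cases hm : m < N + k + 1
    · rw [hC, hD]
      exact le_max_of_le_right (Finset.le_sup' (fun i => μ (x i)) (Finset.mem_range.mpr hm))
    · push_neg at hm
      have hmk : k ≤ m := le_trans (Nat.le_add_left k (N + 1)) (by omega)
      have hxy : y (m - k) = x m := by
        simp only [hy]
        rw [Nat.sub_add_cancel hmk]
      rw [← hxy]
      exact le_max_of_le_left (htail (m - k) (by omega))
  · intro h
    by_contra hMT
    unfold MTlfun at hMT
    push_neg at hMT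
    obtain ⟨t, ht0, hlim⟩ := hMT
    -- frequently μ s > l - ε near t⁺
    have hfreq : ∀ c : ℝ, c < l → ∃ᶠ s in nhdsWithin t (Set.Ioi t), c < μ s := by
      intro c hc
      by_contra hcon
      rw [Filter.not_frequently] at hcon
      have hcon' : ∀ᶠ s in nhdsWithin t (Set.Ioi t), μ s ≤ c := by
        filter_upwards [hcon] with s hs; exact not_lt.mp hs
      have hcob : Filter.IsCoboundedUnder (· ≤ ·) (nhdsWithin t (Set.Ioi t)) μ := by
        apply Filter.isCoboundedUnder_le_of_eventually_le _ (x := 0)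
        filter_upwards [self_mem_nhdsWithin] with s hs
        exact (hmap s (le_trans ht0 (le_of_lt hs))).1
      have : Filter.limsup μ (nhdsWithin t (Set.Ioi t)) ≤ c :=
        Filter.limsup_le_of_le hcob hcon'
      exact absurd (lt_of_le_of_lt this hc) (not_lt.mpr hlim)
    -- choice function for the recursion
    have key : ∀ n : ℕ, ∀ u : ℝ, ∃ v : ℝ, t < u →
        t < v ∧ v < u ∧ l - 1 / (n + 1) < μ v := by
      intro n u
      by_cases hu : t < u
      · have hpos : (0:ℝ) < 1 / (n + 1 : ℝ) := by positivity
        have hfr := hfreq (l - 1 / (n + 1)) (by linarith)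
        obtain ⟨v, hv1, hv2⟩ := Filter.frequently_iff.mp hfr
          (Ioo_mem_nhdsGT_of_mem (⟨le_refl t, hu⟩ : t ∈ Set.Ico t u))
        exact ⟨v, fun _ => ⟨hv1.1, hv1.2, hv2⟩⟩
      · exact ⟨0, fun h => absurd h hu⟩
    choose f hf using key
    set s : ℕ → ℝ := fun n => Nat.rec (f 0 (t + 1)) (fun n prev => f (n + 1) prev) n with hs
    have hs0 : s 0 = f 0 (t + 1) := rfl
    have hssucc : ∀ n, s (n + 1) = f (n + 1) (s n) := fun n => rfl
    have hinv : ∀ n, t < s n ∧ s (n + 1) < s n ∧ l - 1 / (n + 1) < μ (s n) := by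
      intro n
      induction n with
      | zero =>
        have h0 := hf 0 (t + 1) (by linarith)
        refine ⟨h0.1, ?_, by exact_mod_cast h0.2.2⟩
        rw [hssucc, hs0]
        exact (hf 1 _ h0.1).2.1
      | succ n ih =>
        have h1 := hf (n + 1) (s n) ih.1
        rw [← hssucc] at h1
        refine ⟨h1.1, ?_, by exact_mod_cast h1.2.2⟩
        rw [hssucc (n + 1)]
        exact (hf (n + 2) _ h1.1).2.1
    have hspos : ∀ n, 0 ≤ s n := fun n => le_of_lt (lt_of_le_of_lt ht0 (hinv n).1)
    have hS := h s hspos ⟨0, fun n _ => (hinv n).2.1.le⟩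
    have hSbdd : BddAbove (Set.range fun n => μ (s n)) :=
      ⟨l, by rintro _ ⟨n, rfl⟩; exact (hmap _ (hspos n)).2.le⟩
    have hge : l ≤ ⨆ n, μ (s n) := by
      apply le_of_forall_pos_le_add
      intro ε hε
      obtain ⟨n, hn⟩ := exists_nat_one_div_lt hε
      have h1 : l - 1 / (n + 1) < μ (s n) := (hinv n).2.2
      have h2 : μ (s n) ≤ ⨆ m, μ (s m) := le_ciSup hSbdd n
      have : (1 : ℝ) / (n + 1) < ε := hn
      linarith
    linarith
end
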